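/- The quotient Lie superalgebra 𝔞_0/𝔞_1 is isomorphic to 𝔤̂ = ℂd ⋉ 𝔤, where [d, x] = d(x) for x ∈ 𝔤. -/

import Mathlib

/-!
STATEMENT 5: The quotient Lie algebra `𝔞_0/𝔞_1` is isomorphic to
`𝔤̂ = ℂd ⋉ 𝔤`, where `[d, x] = d(x)` (`d` is the diagonalizable derivation,
`d(x_s) = β_s x_s`).

Abstract faithful model: `L` realizes `𝔏 = W ⋉ (𝔤 ⊗ ℂ[t,t⁻¹])`, with the
elements `d i`, `x s j` linearly independent (as they are in `𝔏`) and
satisfying the defining brackets; `G` realizes `𝔤̂` via a basis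
`{D} ∪ {X s}` with `[D, X_s] = β_s X_s` and the structure constants `c` of
`𝔤`.  The isomorphism `𝔞_0/𝔞_1 ≅ 𝔤̂` is expressed by a linear map
`φ : L → G` which on `𝔞_0` is bracket-preserving, surjective onto `G`, and
has kernel exactly `𝔞_1`.
-/

variable {L : Type*} [LieRing L] [LieAlgebra ℂ L] {S : Type*}

/-- `(t-1)^k d_i`, expanded in the basis `{d_n}`. -/
noncomputable def td (d : ℤ → L) (k : ℕ) (i : ℤ) : L :=
  ∑ r ∈ Finset.range (k + 1), ((-1 : ℂ) ^ (k - r) * (k.choose r : ℂ)) • d (i + r)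

/-- `(t-1)^k x_s(j)`, expanded in the basis `{x_s(n)}`. -/
noncomputable def tx (x : S → ℤ → L) (k : ℕ) (s : S) (j : ℤ) : L :=
  ∑ r ∈ Finset.range (k + 1), ((-1 : ℂ) ^ (k - r) * (k.choose r : ℂ)) • x s (j + r)

/-- The subspace `𝔞_k = (t-1)^{k+1} W ⋉ (𝔤 ⊗ (t-1)^k ℂ[t,t⁻¹])`. -/
noncomputable def aSub (d : ℤ → L) (x : S → ℤ → L) (k : ℕ) : Submodule ℂ L :=
  Submodule.span ℂ
    ((Set.range fun i : ℤ => td d (k + 1) i) ∪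
      (Set.range fun p : S × ℤ => tx x k p.1 p.2))

/-!
Send `d i ↦ i • D` and `x s j ↦ X s`. On the generators `(t-1) d_i` and `x_s(j)` of `𝔞_0` this
map takes the values `D` and `X s`, independently of `i` and `j`, so it respects brackets on `𝔞_0`
and maps `𝔞_0` onto `𝔤̂`; it kills the generators `(t-1)² d_i` and `(t-1) x_s(j)` of `𝔞_1`. By
telescoping, `𝔞_0 = 𝔞_1 + span {(t-1) d_0, x_s(0)}`, and the second summand maps isomorphically
onto `𝔤̂` because its image is the basis `{D, X_s}`.
-/

open Submodule

theorem LinearIndependent.exists_linearMap_apply_eq {K V W ι : Type*} [DivisionRing K]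
    [AddCommGroup V] [Module K V] [AddCommGroup W] [Module K W] {v : ι → V}
    (hv : LinearIndependent K v) (f : ι → W) : ∃ φ : V →ₗ[K] W, ∀ i, φ (v i) = f i := by
  obtain ⟨φ, hφ⟩ := ((Finsupp.linearCombination K f).comp hv.repr).exists_extend
  refine ⟨φ, fun i => ?_⟩
  have hvi : v i ∈ span K (Set.range v) := subset_span (Set.mem_range_self i)
  simpa [hv.repr_eq_single i ⟨v i, hvi⟩ rfl] using congr($hφ ⟨v i, hvi⟩)

theorem Submodule.sub_mem_of_forall_add_one_sub_mem {R M : Type*} [Ring R] [AddCommGroup M]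
    [Module R M] (P : Submodule R M) {f : ℤ → M} (h : ∀ i, f (i + 1) - f i ∈ P) (i : ℤ) :
    f i - f 0 ∈ P := by
  induction i using Int.induction_on with
  | zero => simp
  | succ n ih => simpa using add_mem ih (h n)
  | pred n ih => simpa [sub_add_cancel] using sub_mem ih (h (-n - 1))

theorem LinearMap.map_eq_zero_iff_mem_of_le_sup {R M N : Type*} [Ring R] [AddCommGroup M]
    [Module R M] [AddCommGroup N] [Module R N] {A B C : Submodule R M} {φ : M →ₗ[R] N}
    (hB : B ≤ LinearMap.ker φ) (hA : A ≤ B ⊔ C) (hC : Disjoint C (LinearMap.ker φ))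
    {v : M} (hv : v ∈ A) : φ v = 0 ↔ v ∈ B := by
  refine ⟨fun hφv => ?_, fun h => hB h⟩
  obtain ⟨b, hb, c, hc, rfl⟩ := mem_sup.1 (hA hv)
  have hφc : φ c = 0 := by simpa [LinearMap.mem_ker.1 (hB hb)] using hφv
  simpa [disjoint_def.1 hC c hc hφc] using hb

theorem LinearMap.map_lie_of_mem_span {R M N : Type*} [CommRing R] [LieRing M] [LieAlgebra R M]
    [LieRing N] [LieAlgebra R N] (φ : M →ₗ[R] N) {s : Set M}
    (h : ∀ u ∈ s, ∀ v ∈ s, φ ⁅u, v⁆ = ⁅φ u, φ v⁆) {u v : M} (hu : u ∈ span R s)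
    (hv : v ∈ span R s) : φ ⁅u, v⁆ = ⁅φ u, φ v⁆ := by
  induction hu, hv using span_induction₂ with
  | mem_mem u v hu hv => exact h u hu v hv
  | zero_left v hv => simp
  | zero_right u hu => simp
  | add_left u₁ u₂ v _ _ _ ih₁ ih₂ => simp [add_lie, ih₁, ih₂]
  | add_right u v₁ v₂ _ _ _ ih₁ ih₂ => simp [lie_add, ih₁, ih₂]
  | smul_left a u v _ _ ih => simp [smul_lie, ih]
  | smul_right a u v _ _ ih => simp [lie_smul, ih]

section aSub

theorem tx_eq_td (x : S → ℤ → L) (k : ℕ) (s : S) (j : ℤ) : tx x k s j = td (x s) k j := rfl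

theorem td_zero (f : ℤ → L) (i : ℤ) : td f 0 i = f i := by
  simp [td]

theorem td_one (f : ℤ → L) (i : ℤ) : td f 1 i = f (i + 1) - f i := by
  simp [td, Finset.sum_range_succ]
  module

theorem td_two (f : ℤ → L) (i : ℤ) : td f 2 i = td f 1 (i + 1) - td f 1 i := by
  rw [td_one, td_one, show i + 1 + 1 = i + 2 by ring]
  norm_num [td, Finset.sum_range_succ]
  module

variable (d : ℤ → L) (x : S → ℤ → L)

theorem td_one_mem_aSub_zero (i : ℤ) : td d 1 i ∈ aSub d x 0 :=
  subset_span (Or.inl ⟨i, rfl⟩)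

theorem x_mem_aSub_zero (s : S) (j : ℤ) : x s j ∈ aSub d x 0 :=
  td_zero (x s) j ▸ subset_span (Or.inr ⟨(s, j), rfl⟩)

theorem td_two_mem_aSub_one (i : ℤ) : td d 2 i ∈ aSub d x 1 :=
  subset_span (Or.inl ⟨i, rfl⟩)

theorem tx_one_mem_aSub_one (s : S) (j : ℤ) : tx x 1 s j ∈ aSub d x 1 :=
  subset_span (Or.inr ⟨(s, j), rfl⟩)

theorem aSub_zero_le_aSub_one_sup :
    aSub d x 0 ≤ aSub d x 1 ⊔ span ℂ (Set.range fun o : Option S => o.elim (td d 1 0) (x · 0)) := by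
  rw [aSub, span_le]
  rintro _ (⟨i, rfl⟩ | ⟨⟨s, j⟩, rfl⟩)
  · have hi : td d 1 i - td d 1 0 ∈ aSub d x 1 :=
      (aSub d x 1).sub_mem_of_forall_add_one_sub_mem
        (fun n => td_two d n ▸ td_two_mem_aSub_one d x n) i
    change td d 1 i ∈ _
    rw [← sub_add_cancel (td d 1 i) (td d 1 0)]
    exact add_mem (mem_sup_left hi) (mem_sup_right (subset_span ⟨none, rfl⟩))
  · have hj : x s j - x s 0 ∈ aSub d x 1 :=
      (aSub d x 1).sub_mem_of_forall_add_one_sub_mem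
        (fun n => td_one (x s) n ▸ tx_one_mem_aSub_one d x s n) j
    change td (x s) 0 j ∈ _
    rw [td_zero, ← sub_add_cancel (x s j) (x s 0)]
    exact add_mem (mem_sup_left hj) (mem_sup_right (subset_span ⟨some s, rfl⟩))

end aSub

section evaluation

variable {d : ℤ → L} {x : S → ℤ → L} {G : Type*} [LieRing G] [LieAlgebra ℂ G] {D : G}
  {X : S → G} {φ : L →ₗ[ℂ] G}

theorem map_td_one (hφd : ∀ i : ℤ, φ (d i) = (i : ℂ) • D) (i : ℤ) : φ (td d 1 i) = D := by
  rw [td_one, map_sub, hφd, hφd]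
  push_cast
  module

theorem aSub_one_le_ker (hφd : ∀ i : ℤ, φ (d i) = (i : ℂ) • D) (hφx : ∀ s j, φ (x s j) = X s) :
    aSub d x 1 ≤ LinearMap.ker φ := by
  rw [aSub, span_le]
  rintro _ (⟨i, rfl⟩ | ⟨⟨s, j⟩, rfl⟩)
  · change td d 2 i ∈ LinearMap.ker φ
    rw [LinearMap.mem_ker, td_two, map_sub, map_td_one hφd, map_td_one hφd, sub_self]
  · change td (x s) 1 j ∈ LinearMap.ker φ
    rw [LinearMap.mem_ker, td_one, map_sub, hφx, hφx, sub_self]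

theorem map_lie_of_mem_aSub_zero {β : S → ℂ} {c : S → S → (S →₀ ℂ)}
    (hd : ∀ m n : ℤ, ⁅d m, d n⁆ = ((n : ℂ) - (m : ℂ)) • d (m + n))
    (hdx : ∀ (i : ℤ) (s : S) (k : ℤ), ⁅d i, x s k⁆ = ((k : ℂ) + (i : ℂ) * β s) • x s (i + k))
    (hxx : ∀ (s p : S) (j k : ℤ), ⁅x s j, x p k⁆ = (c s p).sum fun q a => a • x q (j + k))
    (hDX : ∀ s, ⁅D, X s⁆ = β s • X s)
    (hXX : ∀ s p, ⁅X s, X p⁆ = (c s p).sum fun q a => a • X q)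
    (hφd : ∀ i : ℤ, φ (d i) = (i : ℂ) • D) (hφx : ∀ s j, φ (x s j) = X s)
    {u v : L} (hu : u ∈ aSub d x 0) (hv : v ∈ aSub d x 0) : φ ⁅u, v⁆ = ⁅φ u, φ v⁆ := by
  have hdd : ∀ i j : ℤ, φ ⁅td d 1 i, td d 1 j⁆ = ⁅D, D⁆ := by
    intro i j
    simp only [td_one, sub_lie, lie_sub, hd, map_sub, map_smul, hφd, lie_self]
    push_cast
    module
  have hdx' : ∀ (i : ℤ) (s : S) (k : ℤ), φ ⁅td d 1 i, x s k⁆ = ⁅D, X s⁆ := by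
    intro i s k
    simp only [td_one, sub_lie, hdx, map_sub, map_smul, hφx, hDX]
    push_cast
    module
  have hxx' : ∀ (s p : S) (j k : ℤ), φ ⁅x s j, x p k⁆ = ⁅X s, X p⁆ := by
    intro s p j k
    simp only [hxx, hXX, map_finsuppSum, map_smul, hφx]
  refine φ.map_lie_of_mem_span ?_ hu hv
  rintro _ (⟨i, rfl⟩ | ⟨⟨s, j⟩, rfl⟩) _ (⟨i', rfl⟩ | ⟨⟨s', j'⟩, rfl⟩) <;>
    simp only [zero_add, tx_eq_td, td_zero, map_td_one hφd, hφx]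
  · exact hdd i i'
  · exact hdx' i s' j'
  · rw [← lie_skew, map_neg, hdx', lie_skew]
  · exact hxx' s s' j j'

theorem map_aSub_zero_eq_top (hspan : span ℂ ({D} ∪ Set.range X) = ⊤)
    (hφd : ∀ i : ℤ, φ (d i) = (i : ℂ) • D) (hφx : ∀ s j, φ (x s j) = X s) :
    (aSub d x 0).map φ = ⊤ := by
  rw [eq_top_iff, ← hspan, span_le]
  rintro _ (rfl | ⟨s, rfl⟩)
  · exact ⟨td d 1 0, td_one_mem_aSub_zero d x 0, map_td_one hφd 0⟩
  · exact ⟨x s 0, x_mem_aSub_zero d x s 0, hφx s 0⟩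

theorem map_eq_zero_iff_mem_aSub_one (hbasis : LinearIndependent ℂ (fun o : Option S => o.elim D X))
    (hφd : ∀ i : ℤ, φ (d i) = (i : ℂ) • D) (hφx : ∀ s j, φ (x s j) = X s)
    {v : L} (hv : v ∈ aSub d x 0) : φ v = 0 ↔ v ∈ aSub d x 1 := by
  have hcomp : φ ∘ (fun o : Option S => o.elim (td d 1 0) (x · 0)) = fun o => o.elim D X := by
    funext o
    cases o <;> simp [map_td_one hφd, hφx]
  refine LinearMap.map_eq_zero_iff_mem_of_le_sup (aSub_one_le_ker hφd hφx)
    (aSub_zero_le_aSub_one_sup d x) ?_ hv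
  exact range_ker_disjoint (hcomp ▸ hbasis)

end evaluation

theorem quotient_a0_a1_iso_ghat (d : ℤ → L) (x : S → ℤ → L) (β : S → ℂ)
    (c : S → S → (S →₀ ℂ))
    (hd : ∀ m n : ℤ, ⁅d m, d n⁆ = ((n : ℂ) - (m : ℂ)) • d (m + n))
    (hdx : ∀ (i : ℤ) (s : S) (k : ℤ),
      ⁅d i, x s k⁆ = ((k : ℂ) + (i : ℂ) * β s) • x s (i + k))
    (hxx : ∀ (s p : S) (j k : ℤ),
      ⁅x s j, x p k⁆ = (c s p).sum fun q a => a • x q (j + k))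
    (hli : LinearIndependent ℂ (Sum.elim d fun p : S × ℤ => x p.1 p.2))
    -- 𝔤̂ = ℂd ⋉ 𝔤, with basis D, X_s:
    (G : Type*) [LieRing G] [LieAlgebra ℂ G] (D : G) (X : S → G)
    (hDX : ∀ s, ⁅D, X s⁆ = β s • X s)
    (hXX : ∀ s p, ⁅X s, X p⁆ = (c s p).sum fun q a => a • X q)
    (hspan : Submodule.span ℂ ({D} ∪ Set.range X) = ⊤)
    (hbasis : LinearIndependent ℂ (fun o : Option S => o.elim D X)) :
    ∃ φ : L →ₗ[ℂ] G,
      (∀ u ∈ aSub d x 0, ∀ v ∈ aSub d x 0, φ ⁅u, v⁆ = ⁅φ u, φ v⁆) ∧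
        Submodule.map φ (aSub d x 0) = ⊤ ∧
          ∀ v ∈ aSub d x 0, (φ v = 0 ↔ v ∈ aSub d x 1) := by
  obtain ⟨φ, hφ⟩ :=
    hli.exists_linearMap_apply_eq (Sum.elim (fun i : ℤ => (i : ℂ) • D) fun p => X p.1)
  have hφd : ∀ i : ℤ, φ (d i) = (i : ℂ) • D := fun i => hφ (Sum.inl i)
  have hφx : ∀ s j, φ (x s j) = X s := fun s j => hφ (Sum.inr (s, j))
  exact ⟨φ, fun u hu v hv => map_lie_of_mem_aSub_zero hd hdx hxx hDX hXX hφd hφx hu hv,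
    map_aSub_zero_eq_top hspan hφd hφx, fun v hv => map_eq_zero_iff_mem_aSub_one hbasis hφd hφx hv⟩
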